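/- arXiv:1502.02082 — 4 statements merged into one kernel-verified Lean document; each statement's English description precedes it below -/
import Mathlib

section
/- Let n ≥ 2 be an integer. Let a_k, b_k, r_k (k = 1,…,n) be reals with a_k ≥ 0, b_k ≥ 0, r_k ≥ 0 and r_k² ≤ a_k·b_k for every k, and let λ_1 ≥ λ_2 ≥ … ≥ λ_{2n} ≥ 0 be reals such that the polynomial identity ∏_{k=1}^n ((x − a_k)(x − b_k) − r_k²) = ∏_{i=1}^{2n} (x − λ_i) holds (i.e., the X-matrix with these parameters has spectrum {λ_1,…,λ_{2n}}). Then for every k ∈ {1,…,n}: 2·( r_k − ∑_{j≠k} √(a_j·b_j) ) ≤ λ_1 − λ_{n+1} − 2·∑_{ℓ=2}^n √(λ_ℓ·λ_{2n+2−ℓ}). Consequently, the genuine multipartite concurrence 2·max{0, max_k ( r_k − ∑_{j≠k} √(a_j b_j) )} of any N-qubit X-state with spectrum λ_1 ≥ … ≥ λ_{2n} (n = 2^{N−1}) is at most max{0, λ_1 − λ_{n+1} − 2·∑_{ℓ=2}^n √(λ_ℓ λ_{2n+2−ℓ})}. -/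
/-!
Each block `[[a, r], [r, b]]` of the X-matrix has eigenvalues `blockEigHi ≥ blockEigLo`, whose
difference is at least `2 r` and whose product is `a b - r² ≤ a b`. So the spectrum splits into a
distinguished pair `(p, q)` (from block `k`) and `n - 1` further pairs `(x, y)`, and it suffices to
show that `p - q - 2 ∑ √(x y)` is largest for `p = λ₁`, `q = λ_{n+1}` and the nested pairs
`(λ_ℓ, λ_{2n+2-ℓ})`. This is an exchange argument: moving `λ₁` into the slot of `p` does not
decrease the quantity, and on the remaining odd family, pairing the largest with the smallest
element does not increase `q + 2 ∑ √(x y)` (essentially `√(a b) + √(y w) ≤ √(a y) + √(b w)` for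
`b ≤ y, w ≤ a`); induction on the rest finishes.
-/

open Polynomial Real

def flattenPairs {α : Type*} (P : Multiset (α × α)) : Multiset α :=
  P.map Prod.fst + P.map Prod.snd

@[simp]
lemma flattenPairs_cons {α : Type*} (z : α × α) (P : Multiset (α × α)) :
    flattenPairs (z ::ₘ P) = z.1 ::ₘ z.2 ::ₘ flattenPairs P := by
  simp [flattenPairs, Multiset.cons_add, Multiset.add_cons, Multiset.cons_swap]

lemma flattenPairs_map {ι α : Type*} (f g : ι → α) (s : Multiset ι) :
    flattenPairs (s.map fun i => (f i, g i)) = s.map f + s.map g := by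
  simp [flattenPairs]

noncomputable def sqrtProdSum (P : Multiset (ℝ × ℝ)) : ℝ :=
  (P.map fun z => √(z.1 * z.2)).sum

@[simp]
lemma sqrtProdSum_cons (z : ℝ × ℝ) (P : Multiset (ℝ × ℝ)) :
    sqrtProdSum (z ::ₘ P) = √(z.1 * z.2) + sqrtProdSum P := by
  simp [sqrtProdSum]

lemma exists_flattenPairs_eq_cons_cons {x : ℝ} {P : Multiset (ℝ × ℝ)}
    (hx : x ∈ flattenPairs P) : ∃ y P', flattenPairs P = x ::ₘ y ::ₘ flattenPairs P' ∧
      sqrtProdSum P = √(x * y) + sqrtProdSum P' := by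
  obtain ⟨z, hz, hzx⟩ : ∃ z ∈ P, z.1 = x ∨ z.2 = x := by
    rcases Multiset.mem_add.1 hx with h | h <;> obtain ⟨z, hz, rfl⟩ := Multiset.mem_map.1 h
    exacts [⟨z, hz, .inl rfl⟩, ⟨z, hz, .inr rfl⟩]
  rw [← Multiset.cons_erase hz]
  rcases hzx with rfl | rfl
  · exact ⟨z.2, P.erase z, by simp⟩
  · exact ⟨z.1, P.erase z, by simp [Multiset.cons_swap, mul_comm]⟩

lemma antitoneOn_shift_Iic {c : ℕ → ℝ} {n : ℕ} (hc : AntitoneOn c (Set.Iic (n + 1))) :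
    AntitoneOn (fun i => c (i + 1)) (Set.Iic n) := fun _ hi _ hj hij =>
  hc (Nat.succ_le_succ hi) (Nat.succ_le_succ hj) (Nat.succ_le_succ hij)

lemma map_range_succ (c : ℕ → ℝ) (n : ℕ) :
    (Multiset.range (n + 1)).map c = c 0 ::ₘ (Multiset.range n).map (fun i => c (i + 1)) := by
  induction n with
  | zero => rfl
  | succ n ih => rw [Multiset.range_succ, Multiset.map_cons, ih, Multiset.range_succ,
      Multiset.map_cons, Multiset.cons_swap]

lemma add_two_sqrt_mul_extremes_le {a b y : ℝ} (hb : 0 ≤ b) (hby : b ≤ y) (hya : y ≤ a) :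
    y + 2 * √(a * b) ≤ a + 2 * √(b * y) ∧ y + 2 * √(a * b) ≤ b + 2 * √(a * y) := by
  have hy : 0 ≤ y := hb.trans hby
  have ha : 0 ≤ a := hy.trans hya
  rw [sqrt_mul ha, sqrt_mul hb, sqrt_mul ha]
  have hsb := sqrt_le_sqrt hby
  have hsy := sqrt_le_sqrt hya
  have := sq_sqrt ha; have := sq_sqrt hb; have := sq_sqrt hy
  constructor <;> nlinarith [sqrt_nonneg b]

lemma sqrt_mul_extremes_add_le {a b y w : ℝ} (hb : 0 ≤ b) (hby : b ≤ y) (hbw : b ≤ w)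
    (hwa : w ≤ a) : √(a * b) + √(y * w) ≤ √(a * y) + √(b * w) := by
  have hy : 0 ≤ y := hb.trans hby
  have hw : 0 ≤ w := hb.trans hbw
  have ha : 0 ≤ a := hw.trans hwa
  rw [sqrt_mul ha, sqrt_mul hy, sqrt_mul ha, sqrt_mul hb]
  nlinarith [sqrt_le_sqrt hby, sqrt_le_sqrt hwa]

lemma exists_extremes_paired_le {a b q : ℝ} {P : Multiset (ℝ × ℝ)} {R : Multiset ℝ}
    (hb : 0 ≤ b) (hR : ∀ x ∈ R, b ≤ x ∧ x ≤ a) (h : q ::ₘ flattenPairs P = a ::ₘ b ::ₘ R) :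
    ∃ q' P', q' ::ₘ flattenPairs P' = R ∧
      q' + 2 * (√(a * b) + sqrtProdSum P') ≤ q + 2 * sqrtProdSum P := by
  have ha : a ∈ q ::ₘ flattenPairs P := h ▸ Multiset.mem_cons_self a _
  rcases Multiset.mem_cons.1 ha with rfl | ha
  · rw [Multiset.cons_inj_right] at h
    obtain ⟨y, P₁, hP, hS⟩ := exists_flattenPairs_eq_cons_cons (h ▸ Multiset.mem_cons_self b R)
    rw [hP, Multiset.cons_inj_right] at h
    have hy := hR y (h ▸ Multiset.mem_cons_self y _)
    refine ⟨y, P₁, h, ?_⟩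
    have := (add_two_sqrt_mul_extremes_le hb hy.1 hy.2).1
    linarith
  obtain ⟨y, P₁, hP, hS⟩ := exists_flattenPairs_eq_cons_cons ha
  rw [hP, Multiset.cons_swap, Multiset.cons_inj_right] at h
  have hb' : b ∈ q ::ₘ y ::ₘ flattenPairs P₁ := h ▸ Multiset.mem_cons_self b R
  rcases Multiset.mem_cons.1 hb' with rfl | hb'
  · rw [Multiset.cons_inj_right] at h
    have hy := hR y (h ▸ Multiset.mem_cons_self y _)
    refine ⟨y, P₁, h, ?_⟩
    have := (add_two_sqrt_mul_extremes_le hb hy.1 hy.2).2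
    linarith
  rcases Multiset.mem_cons.1 hb' with rfl | hb'
  · rw [Multiset.cons_swap, Multiset.cons_inj_right] at h
    exact ⟨q, P₁, h, by rw [hS]⟩
  obtain ⟨w, P₂, hP₁, hS₁⟩ := exists_flattenPairs_eq_cons_cons hb'
  rw [hP₁, Multiset.cons_swap y, Multiset.cons_swap q, Multiset.cons_inj_right] at h
  have hy := hR y (h ▸ by simp)
  have hw := hR w (h ▸ by simp)
  refine ⟨q, (y, w) ::ₘ P₂, by rw [flattenPairs_cons, h], ?_⟩
  have := sqrt_mul_extremes_add_le hb hy.1 hw.1 hw.2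
  simp only [sqrtProdSum_cons, hS, hS₁]
  linarith

lemma exists_top_distinguished_le {a p q : ℝ} {P : Multiset (ℝ × ℝ)} {R : Multiset ℝ}
    (hR : ∀ x ∈ R, 0 ≤ x ∧ x ≤ a) (h : p ::ₘ q ::ₘ flattenPairs P = a ::ₘ R) :
    ∃ q' P', q' ::ₘ flattenPairs P' = R ∧
      p - q - 2 * sqrtProdSum P ≤ a - q' - 2 * sqrtProdSum P' := by
  have ha : a ∈ p ::ₘ q ::ₘ flattenPairs P := h ▸ Multiset.mem_cons_self a _
  rcases Multiset.mem_cons.1 ha with rfl | ha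
  · exact ⟨q, P, (Multiset.cons_inj_right _).1 h, le_rfl⟩
  rcases Multiset.mem_cons.1 ha with rfl | ha
  · rw [Multiset.cons_swap, Multiset.cons_inj_right] at h
    have hp := hR p (h ▸ Multiset.mem_cons_self p _)
    exact ⟨p, P, h, by linarith⟩
  obtain ⟨v, P₁, hP, hS⟩ := exists_flattenPairs_eq_cons_cons ha
  rw [hP, Multiset.cons_swap q, Multiset.cons_swap p, Multiset.cons_inj_right] at h
  have hp := hR p (h ▸ Multiset.mem_cons_self p _)
  have hv := hR v (h ▸ by simp)
  refine ⟨q, (p, v) ::ₘ P₁, by rw [flattenPairs_cons, ← h, Multiset.cons_swap], ?_⟩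
  have := sqrt_le_sqrt (mul_le_mul_of_nonneg_right hp.2 hv.1)
  simp only [sqrtProdSum_cons, hS]
  linarith

theorem le_add_two_mul_sqrtProdSum {k : ℕ} {c : ℕ → ℝ} (hc : AntitoneOn c (Set.Iic (2 * k)))
    (hc0 : 0 ≤ c (2 * k)) {q : ℝ} {P : Multiset (ℝ × ℝ)}
    (h : q ::ₘ flattenPairs P = (Multiset.range (2 * k + 1)).map c) :
    c k + 2 * ∑ ℓ ∈ Finset.range k, √(c ℓ * c (2 * k - ℓ)) ≤ q + 2 * sqrtProdSum P := by
  induction k generalizing c q P with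
  | zero =>
    obtain rfl : P = 0 := by simpa [flattenPairs] using congrArg Multiset.card h
    obtain rfl : q = c 0 := by simpa [flattenPairs] using h
    simp [sqrtProdSum]
  | succ k ih =>
    have hc' := antitoneOn_shift_Iic (hc.mono (Set.Iic_subset_Iic.2 (by omega : 2 * k + 1 ≤ _)))
    have hc0' : 0 ≤ c (2 * k + 1) :=
      hc0.trans (hc (by simp only [Set.mem_Iic]; omega) Set.self_mem_Iic (by omega))
    rw [show 2 * (k + 1) + 1 = 2 * k + 1 + 1 + 1 by ring, map_range_succ, Multiset.range_succ,
      Multiset.map_cons, show 2 * k + 1 + 1 = 2 * (k + 1) by ring] at h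
    have hR : ∀ x ∈ (Multiset.range (2 * k + 1)).map (fun i => c (i + 1)),
        c (2 * (k + 1)) ≤ x ∧ x ≤ c 0 := by
      intro x hx
      obtain ⟨i, hi, rfl⟩ := Multiset.mem_map.1 hx
      have hi := Multiset.mem_range.1 hi
      exact ⟨hc (by simp only [Set.mem_Iic]; omega) Set.self_mem_Iic (by omega),
        hc (by simp) (by simp only [Set.mem_Iic]; omega) (by omega)⟩
    obtain ⟨q', P', h', hle⟩ := exists_extremes_paired_le hc0 hR h
    have := ih hc' hc0' h'
    have hsum : ∑ ℓ ∈ Finset.range k, √(c (ℓ + 1) * c (2 * (k + 1) - (ℓ + 1))) =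
        ∑ ℓ ∈ Finset.range k, √(c (ℓ + 1) * c (2 * k - ℓ + 1)) :=
      Finset.sum_congr rfl fun ℓ hℓ => by
        rw [show 2 * (k + 1) - (ℓ + 1) = 2 * k - ℓ + 1 by
          have := Finset.mem_range.1 hℓ; omega]
    rw [Finset.sum_range_succ', hsum, Nat.sub_zero]
    linarith

theorem sub_sub_two_mul_sqrtProdSum_le {m : ℕ} {c : ℕ → ℝ} (hc : AntitoneOn c (Set.Iio (2 * m)))
    (hc0 : ∀ i < 2 * m, 0 ≤ c i) {p q : ℝ} {P : Multiset (ℝ × ℝ)}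
    (h : p ::ₘ q ::ₘ flattenPairs P = (Multiset.range (2 * m)).map c) :
    p - q - 2 * sqrtProdSum P ≤
      c 0 - c m - 2 * ∑ ℓ ∈ Finset.Ico 1 m, √(c ℓ * c (2 * m - ℓ)) := by
  cases m with
  | zero => simp at h
  | succ k =>
    rw [show 2 * (k + 1) = 2 * k + 1 + 1 by ring, map_range_succ] at h
    rw [show 2 * (k + 1) = 2 * k + 1 + 1 by ring, Set.Iio_add_one_eq_Iic] at hc
    have hR : ∀ x ∈ (Multiset.range (2 * k + 1)).map (fun i => c (i + 1)), 0 ≤ x ∧ x ≤ c 0 := by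
      intro x hx
      obtain ⟨i, hi, rfl⟩ := Multiset.mem_map.1 hx
      have hi := Multiset.mem_range.1 hi
      exact ⟨hc0 _ (by omega), hc (by simp) (by simp only [Set.mem_Iic]; omega) (by omega)⟩
    obtain ⟨q', P', h', hle⟩ := exists_top_distinguished_le hR h
    have := le_add_two_mul_sqrtProdSum (antitoneOn_shift_Iic hc) (hc0 _ (by omega)) h'
    have hsum : ∑ ℓ ∈ Finset.Ico 1 (k + 1), √(c ℓ * c (2 * (k + 1) - ℓ)) =
        ∑ ℓ ∈ Finset.range k, √(c (ℓ + 1) * c (2 * k - ℓ + 1)) := by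
      rw [Finset.sum_Ico_eq_sum_range, Nat.add_sub_cancel]
      refine Finset.sum_congr rfl fun ℓ hℓ => ?_
      rw [show 2 * (k + 1) - (1 + ℓ) = 2 * k - ℓ + 1 by
        have := Finset.mem_range.1 hℓ; omega, add_comm 1 ℓ]
    rw [hsum]
    linarith

noncomputable def blockEigHi (a b r : ℝ) : ℝ := (a + b + √((a - b) ^ 2 + 4 * r ^ 2)) / 2

noncomputable def blockEigLo (a b r : ℝ) : ℝ := (a + b - √((a - b) ^ 2 + 4 * r ^ 2)) / 2

lemma blockEigHi_mul_blockEigLo (a b r : ℝ) :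
    blockEigHi a b r * blockEigLo a b r = a * b - r ^ 2 := by
  have := sq_sqrt (by positivity : 0 ≤ (a - b) ^ 2 + 4 * r ^ 2)
  unfold blockEigHi blockEigLo
  linear_combination -this / 4

lemma two_mul_le_blockEigHi_sub_blockEigLo (a b r : ℝ) :
    2 * r ≤ blockEigHi a b r - blockEigLo a b r := by
  have : √((2 * r) ^ 2) ≤ √((a - b) ^ 2 + 4 * r ^ 2) :=
    sqrt_le_sqrt (by nlinarith [sq_nonneg (a - b)])
  unfold blockEigHi blockEigLo
  linarith [le_abs_self (2 * r), sqrt_sq_eq_abs (2 * r)]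

lemma sqrt_blockEigHi_mul_blockEigLo_le (a b r : ℝ) :
    √(blockEigHi a b r * blockEigLo a b r) ≤ √(a * b) := by
  rw [blockEigHi_mul_blockEigLo]
  exact sqrt_le_sqrt (by nlinarith [sq_nonneg r])

lemma quadratic_eq_mul_blockEig (a b r : ℝ) :
    (X - C a) * (X - C b) - C r ^ 2 =
      (X - C (blockEigHi a b r)) * (X - C (blockEigLo a b r)) := by
  have hsum : C (blockEigHi a b r) + C (blockEigLo a b r) = C a + C b := by
    rw [← C_add, ← C_add]; unfold blockEigHi blockEigLo; ring_nf
  have hprod : C (blockEigHi a b r) * C (blockEigLo a b r) = C a * C b - C r ^ 2 := by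
    rw [← C_mul, blockEigHi_mul_blockEigLo, C_sub, C_mul, C_pow]
  linear_combination (X : ℝ[X]) * hsum - hprod

lemma map_add_map_eq_of_prod_eq {R ι κ : Type*} [CommRing R] [IsDomain R] {s : Finset ι}
    {t : Finset κ} {f g : ι → R} {h : κ → R}
    (H : ∏ i ∈ s, (X - C (f i)) * (X - C (g i)) = ∏ j ∈ t, (X - C (h j))) :
    s.val.map f + s.val.map g = t.val.map h := by
  rw [← roots_multiset_prod_X_sub_C (s.val.map f + s.val.map g),
    ← roots_multiset_prod_X_sub_C (t.val.map h)]
  congr 1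
  rw [Multiset.map_add, Multiset.prod_add, Multiset.map_map, Multiset.map_map, Multiset.map_map,
    ← Finset.prod_eq_multiset_prod, ← Finset.prod_eq_multiset_prod,
    ← Finset.prod_eq_multiset_prod, ← Finset.prod_mul_distrib]
  exact H

/-- If the X-matrix parameters `a_k, b_k, r_k ≥ 0` with `r_k² ≤ a_k b_k` give rise to the
spectrum `λ_1 ≥ … ≥ λ_{2n} ≥ 0` (0-based: `lam 0 ≥ … ≥ lam (2n-1)`), i.e.
`∏_{k=1}^n ((x - a_k)(x - b_k) - r_k²) = ∏_{i=1}^{2n} (x - λ_i)`, then for every `k`,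
`2 (r_k - ∑_{j ≠ k} √(a_j b_j)) ≤ λ_1 - λ_{n+1} - 2 ∑_{ℓ=2}^n √(λ_ℓ λ_{2n+2-ℓ})`;
consequently the GM-concurrence `2 max{0, max_k (r_k - ∑_{j≠k} √(a_j b_j))}` is at most
`max{0, λ_1 - λ_{n+1} - 2 ∑_{ℓ=2}^n √(λ_ℓ λ_{2n+2-ℓ})}`. -/
theorem xstate_gm_concurrence_le (n : ℕ) (hn : 2 ≤ n) (a b r : ℕ → ℝ)
    (lam : ℕ → ℝ)
    (hsort : ∀ i j, i ≤ j → j < 2 * n → lam j ≤ lam i)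
    (hpos : ∀ i < 2 * n, 0 ≤ lam i)
    (hpoly : ∏ k ∈ Finset.range n,
        ((X - C (a k)) * (X - C (b k)) - C (r k) ^ 2) =
      ∏ i ∈ Finset.range (2 * n), (X - C (lam i))) :
    (∀ k < n,
      2 * (r k - ∑ j ∈ (Finset.range n).erase k, Real.sqrt (a j * b j)) ≤
        lam 0 - lam n -
          2 * ∑ ℓ ∈ Finset.Ico 1 n, Real.sqrt (lam ℓ * lam (2 * n - ℓ))) ∧
    2 * max 0 ((Finset.range n).sup' (Finset.nonempty_range_iff.mpr (by omega))
        (fun k => r k - ∑ j ∈ (Finset.range n).erase k, Real.sqrt (a j * b j))) ≤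
      max 0 (lam 0 - lam n -
        2 * ∑ ℓ ∈ Finset.Ico 1 n, Real.sqrt (lam ℓ * lam (2 * n - ℓ))) := by
  set hi := fun k => blockEigHi (a k) (b k) (r k)
  set lo := fun k => blockEigLo (a k) (b k) (r k)
  have hroots : (Finset.range n).val.map hi + (Finset.range n).val.map lo =
      (Multiset.range (2 * n)).map lam :=
    map_add_map_eq_of_prod_eq (by simpa only [quadratic_eq_mul_blockEig] using hpoly)
  have hbound : ∀ k < n,
      2 * (r k - ∑ j ∈ (Finset.range n).erase k, √(a j * b j)) ≤
        lam 0 - lam n - 2 * ∑ ℓ ∈ Finset.Ico 1 n, √(lam ℓ * lam (2 * n - ℓ)) := by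
    intro k hk
    set others := ((Finset.range n).erase k).val.map fun j => (hi j, lo j)
    have hsplit : hi k ::ₘ lo k ::ₘ flattenPairs others = (Multiset.range (2 * n)).map lam := by
      have hval : (Finset.range n).val = k ::ₘ ((Finset.range n).erase k).val := by
        rw [Finset.erase_val, Multiset.cons_erase (by simpa using hk)]
      rw [← hroots, hval, flattenPairs_map, Multiset.map_cons, Multiset.map_cons,
        Multiset.cons_add, Multiset.add_cons]
    have hothers : sqrtProdSum others ≤ ∑ j ∈ (Finset.range n).erase k, √(a j * b j) :=
      calc sqrtProdSum others = ∑ j ∈ (Finset.range n).erase k, √(hi j * lo j) := by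
            simp [others, sqrtProdSum, Finset.sum_eq_multiset_sum]
        _ ≤ _ := Finset.sum_le_sum fun j _ => sqrt_blockEigHi_mul_blockEigLo_le (a j) (b j) (r j)
    have := sub_sub_two_mul_sqrtProdSum_le (fun i _ j hj hij => hsort i j hij hj) hpos hsplit
    linarith [two_mul_le_blockEigHi_sub_blockEigLo (a k) (b k) (r k)]
  refine ⟨hbound, ?_⟩
  obtain ⟨k, hk, hmax⟩ :=
    Finset.exists_mem_eq_sup' (Finset.nonempty_range_iff.mpr (by omega : n ≠ 0))
    (fun k => r k - ∑ j ∈ (Finset.range n).erase k, √(a j * b j))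
  rw [hmax, mul_max_of_nonneg _ _ zero_le_two, mul_zero]
  exact max_le_max_left 0 (hbound k (Finset.mem_range.1 hk))
end

section
/- Let n ≥ 2 be an integer and let γ ∈ (0, 1/2]. Define f(γ) = 1/(n+1) if γ ≤ 1/(n+1) and f(γ) = γ if γ ≥ 1/(n+1), g(γ) = (1 − 2f(γ))/(n−1), and the spectrum λ ∈ ℝ^{2n} by λ_1 = f(γ)+γ, λ_j = g(γ) for 2 ≤ j ≤ n, λ_{n+1} = f(γ)−γ, and λ_{n+j} = 0 for 2 ≤ j ≤ n. Then: (i) λ_1 ≥ λ_2 ≥ … ≥ λ_{2n} ≥ 0; (ii) ∑_{k=1}^{2n} λ_k = 1; (iii) ∑_{k=1}^{2n} λ_k² = 2γ² + 1/(n+1) when γ ≤ 1/(n+1), and ∑_{k=1}^{2n} λ_k² = 4γ² + (1−2γ)²/(n−1) when γ ≥ 1/(n+1); and (iv) λ_1 − λ_{n+1} − 2·∑_{j=2}^n √(λ_j·λ_{2n+2−j}) = 2γ. -/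
/-!
With `f = max γ (1/(n+1))` the three nonzero levels are `f + γ ≥ g ≥ f - γ ≥ 0`: either
`f = g = 1/(n+1)` (small `γ`) or `f = γ`, `f - γ = 0` (large `γ`). The trace is
`(f + γ) + (n - 1) g + (f - γ) = 2f + (1 - 2f) = 1`, and in the objective every square root
pairs a level `g` with one of the trailing zeros, leaving `(f + γ) - (f - γ) = 2γ`.
-/

open Finset

/-- The spectrum `λ_1 = a`, `λ_2 = … = λ_n = b`, `λ_{n+1} = c`, `λ_k = 0` for `k > n + 1`,
indexed from `0`. -/
def xSpectrum {α : Type*} [Zero α] (n : ℕ) (a b c : α) (i : ℕ) : α :=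
  if i = 0 then a else if i < n then b else if i = n then c else 0

section XSpectrum

variable {α : Type*} {n : ℕ} {a b c : α}

theorem xSpectrum_antitone [Preorder α] [Zero α] (hab : b ≤ a) (hbc : c ≤ b) (hc : 0 ≤ c) :
    Antitone (xSpectrum n a b c) := by
  have hca : c ≤ a := hbc.trans hab
  have hb : 0 ≤ b := hc.trans hbc
  have ha : 0 ≤ a := hb.trans hab
  intro i j hij
  unfold xSpectrum
  split_ifs <;> first | omega | exact le_rfl

theorem xSpectrum_nonneg [Preorder α] [Zero α] (h : Antitone (xSpectrum n a b c)) (i : ℕ) :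
    0 ≤ xSpectrum n a b c i := by
  have hzero : xSpectrum n a b c (i + n + 1) = 0 := by
    unfold xSpectrum
    rw [if_neg (by omega), if_neg (by omega), if_neg (by omega)]
  exact hzero ▸ h (by omega)

theorem xSpectrum_zero [Zero α] : xSpectrum n a b c 0 = a := if_pos rfl

theorem xSpectrum_self [Zero α] (hn : n ≠ 0) : xSpectrum n a b c n = c := by
  unfold xSpectrum
  rw [if_neg hn, if_neg (lt_irrefl n), if_pos rfl]

theorem xSpectrum_two_mul_sub [Zero α] {j : ℕ} (hj : j < n) :
    xSpectrum n a b c (2 * n - j) = 0 := by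
  unfold xSpectrum
  rw [if_neg (by omega), if_neg (by omega), if_neg (by omega)]

theorem sum_range_two_mul_eq {M : Type*} [AddCommMonoid M] (F : ℕ → M) (hn : n ≠ 0) :
    ∑ k ∈ range (2 * n), F k =
      F 0 + ∑ k ∈ Ico 1 n, F k + F n + ∑ k ∈ Ico (n + 1) (2 * n), F k := by
  rw [range_eq_Ico, ← sum_Ico_consecutive _ (Nat.zero_le n) (by omega : n ≤ 2 * n),
    sum_eq_sum_Ico_succ_bot (by omega : 0 < n), sum_eq_sum_Ico_succ_bot (by omega : n < 2 * n)]
  abel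

theorem sum_range_two_mul_xSpectrum [Zero α] {M : Type*} [AddCommMonoid M] (φ : α → M)
    (hn : n ≠ 0) :
    ∑ k ∈ range (2 * n), φ (xSpectrum n a b c k) =
      φ a + (n - 1) • φ b + φ c + (n - 1) • φ 0 := by
  have hmid : ∑ k ∈ Ico 1 n, φ (xSpectrum n a b c k) = (n - 1) • φ b := by
    rw [sum_congr rfl fun k hk => ?_, sum_const, Nat.card_Ico]
    rw [mem_Ico] at hk
    unfold xSpectrum
    rw [if_neg (by omega), if_pos hk.2]
  have htail : ∑ k ∈ Ico (n + 1) (2 * n), φ (xSpectrum n a b c k) = (n - 1) • φ 0 := by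
    rw [sum_congr rfl fun k hk => ?_, sum_const, Nat.card_Ico]
    · congr 1
      omega
    rw [mem_Ico] at hk
    unfold xSpectrum
    rw [if_neg (by omega), if_neg (by omega), if_neg (by omega)]
  rw [sum_range_two_mul_eq _ hn, xSpectrum_zero, xSpectrum_self hn, hmid, htail]

end XSpectrum

section Levels

variable {N γ f : ℝ}

theorem one_sub_two_mul_div_sub_one_le (hN : 1 < N) (hf : 1 / (N + 1) ≤ f) :
    (1 - 2 * f) / (N - 1) ≤ 1 / (N + 1) := by
  have hN₁ : 0 < N - 1 := by linarith
  have hN₂ : 0 < N + 1 := by linarith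
  rw [div_le_iff₀ hN₂] at hf
  rw [div_le_div_iff₀ hN₁ hN₂]
  nlinarith

theorem one_sub_two_div_add_one_div_sub_one (hN : 1 < N) :
    (1 - 2 * (1 / (N + 1))) / (N - 1) = 1 / (N + 1) := by
  have hN₁ : N - 1 ≠ 0 := by linarith
  have hN₂ : N + 1 ≠ 0 := by linarith
  field_simp
  ring

theorem xmems_levels (hN : 1 < N) (hγ₀ : 0 ≤ γ) (hγ₁ : γ ≤ 1 / 2)
    (hf : f = max γ (1 / (N + 1))) :
    (1 - 2 * f) / (N - 1) ≤ f + γ ∧ f - γ ≤ (1 - 2 * f) / (N - 1) ∧ 0 ≤ f - γ := by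
  have hγf : γ ≤ f := hf ▸ le_max_left _ _
  have hinv : 1 / (N + 1) ≤ f := hf ▸ le_max_right _ _
  have hg : (1 - 2 * f) / (N - 1) ≤ 1 / (N + 1) := one_sub_two_mul_div_sub_one_le hN hinv
  refine ⟨by linarith, ?_, by linarith⟩
  rcases max_choice γ (1 / (N + 1)) with h | h <;> rw [h] at hf <;> subst hf
  · rw [sub_self]
    exact div_nonneg (by linarith) (by linarith)
  · rw [one_sub_two_div_add_one_div_sub_one hN]
    linarith

end Levels

/-- Properties of the X-MEMS spectrum parametrized by `γ ∈ (0, 1/2]` (0-based `lam`, so the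
`1`-based `λ_k` is `lam (k-1)`): with `f(γ) = 1/(n+1)` for `γ ≤ 1/(n+1)` and `f(γ) = γ`
otherwise, `g(γ) = (1 - 2 f(γ))/(n-1)`, and
`λ_1 = f+γ, λ_j = g (2 ≤ j ≤ n), λ_{n+1} = f-γ, λ_{n+j} = 0 (2 ≤ j ≤ n)`, the spectrum is
sorted and nonnegative, sums to `1`, has the stated piecewise sum of squares (purity), and its
objective `λ_1 - λ_{n+1} - 2 ∑_{j=2}^n √(λ_j λ_{2n+2-j})` equals `2γ`. -/
theorem xmems_spectrum_props (n : ℕ) (hn : 2 ≤ n) (γ : ℝ)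
    (hγ1 : 0 < γ) (hγ2 : γ ≤ 1 / 2)
    (f g : ℝ)
    (hf : f = if γ ≤ 1 / ((n : ℝ) + 1) then 1 / ((n : ℝ) + 1) else γ)
    (hg : g = (1 - 2 * f) / ((n : ℝ) - 1))
    (lam : ℕ → ℝ)
    (hlam : ∀ i, lam i =
      if i = 0 then f + γ else if i < n then g else if i = n then f - γ else 0) :
    (∀ i j, i ≤ j → j < 2 * n → lam j ≤ lam i) ∧
    (∀ i < 2 * n, 0 ≤ lam i) ∧
    (∑ k ∈ Finset.range (2 * n), lam k = 1) ∧
    (γ ≤ 1 / ((n : ℝ) + 1) →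
      ∑ k ∈ Finset.range (2 * n), (lam k) ^ 2 = 2 * γ ^ 2 + 1 / ((n : ℝ) + 1)) ∧
    (1 / ((n : ℝ) + 1) ≤ γ →
      ∑ k ∈ Finset.range (2 * n), (lam k) ^ 2 =
        4 * γ ^ 2 + (1 - 2 * γ) ^ 2 / ((n : ℝ) - 1)) ∧
    (lam 0 - lam n -
      2 * ∑ j ∈ Finset.Ico 1 n, Real.sqrt (lam j * lam (2 * n - j)) = 2 * γ) := by
  have hN : (1 : ℝ) < n := by exact_mod_cast hn
  have hn₀ : n ≠ 0 := by omega
  rw [← max_def] at hf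
  obtain ⟨hgf, hfg, hf₀⟩ := xmems_levels hN hγ1.le hγ2 hf
  rw [← hg] at hgf hfg
  obtain rfl : lam = xSpectrum n (f + γ) g (f - γ) := funext hlam
  have hanti := xSpectrum_antitone (n := n) hgf hfg hf₀
  have hN₁ : (n : ℝ) - 1 ≠ 0 := by linarith
  have hcount : ((n - 1 : ℕ) : ℝ) = n - 1 := by
    rw [Nat.cast_sub (by omega), Nat.cast_one]
  have htrace : ∑ k ∈ range (2 * n), xSpectrum n (f + γ) g (f - γ) k =
      (f + γ) + (n - 1) * g + (f - γ) := by
    rw [sum_range_two_mul_xSpectrum (fun x : ℝ => x) hn₀, nsmul_eq_mul, hcount]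
    ring
  have hpurity : ∑ k ∈ range (2 * n), xSpectrum n (f + γ) g (f - γ) k ^ 2 =
      (f + γ) ^ 2 + (n - 1) * g ^ 2 + (f - γ) ^ 2 := by
    rw [sum_range_two_mul_xSpectrum (fun x : ℝ => x ^ 2) hn₀, nsmul_eq_mul, hcount]
    ring
  refine ⟨fun i j hij _ => hanti hij, fun i _ => xSpectrum_nonneg hanti i, ?_, fun hsmall => ?_,
    fun hlarge => ?_, ?_⟩
  · rw [htrace, hg]
    field_simp
    ring
  · rw [max_eq_right hsmall] at hf
    rw [hpurity, hg, hf, one_sub_two_div_add_one_div_sub_one hN]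
    field_simp
    ring
  · rw [max_eq_left hlarge] at hf
    rw [hpurity, hg, hf]
    field_simp
    ring
  · rw [sum_eq_zero fun j hj => by rw [xSpectrum_two_mul_sub (mem_Ico.mp hj).2, mul_zero,
      Real.sqrt_zero], xSpectrum_zero, xSpectrum_self hn₀]
    ring
end

section
/- Let n ≥ 2 be an integer and γ ∈ (0, 1/2]. Define 𝔷_1 = 2+2γ+1/(2γ), 𝔷_2 = (1+γ)²/(2γ), 𝔷_3 = 1/(2γ), 𝔷_4 = 0 and P = 2γ² + 1/(n+1) when 0 < γ ≤ 1/(n+1); and 𝔷_1 = (1−n)(1+2γ)²/(2(1−2nγ)), 𝔷_2 = (n−2γ)²/(2(1−n)(1−2nγ)), 𝔷_3 = (1−n)/(2(1−2nγ)), 𝔷_4 = 1 + (1−2γ)/(1−2nγ) and P = 4γ² + (1−2γ)²/(n−1) when 1/(n+1) ≤ γ ≤ 1/2. Then in both cases (1/(n+1))·[ n·𝔷_1 + 2(n−1)·(𝔷_2 − √(𝔷_1·𝔷_2)) ] + 𝔷_3·(P − 1) + 𝔷_4 = 1 + 2γ. Equivalently, the dual SDP value −tr(F_0·𝒵) equals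 −1 − 2γ, matching the primal feasible value of the X-MEMS spectrum of purity P. -/
/-!
In both regimes the product `𝔷_1 𝔷_2` is the square of an explicit nonnegative rational function
of `γ` and `n`: for small `γ` one has `𝔷_1 = (1 + 2γ)² / (2γ)` and `𝔷_2 = (1 + γ)² / (2γ)`, and for
large `γ` the factor `(1 - n)` cancels between `𝔷_1` and `𝔷_2`. Once the square root is removed,
the dual value is a rational identity in `γ` and `n`.
-/

/-- The closed form of `tr(F₀ 𝒵)`. -/
noncomputable def traceF0Z (n z1 z2 z3 z4 P : ℝ) : ℝ :=
  1 / (n + 1) * (n * z1 + 2 * (n - 1) * (z2 - √(z1 * z2))) + z3 * (P - 1) + z4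

lemma sqrt_dual_mul_of_le_inv_succ {γ : ℝ} (hγ : 0 < γ) :
    √((2 + 2 * γ + 1 / (2 * γ)) * ((1 + γ) ^ 2 / (2 * γ))) = (1 + 2 * γ) * (1 + γ) / (2 * γ) := by
  have hsq : (2 + 2 * γ + 1 / (2 * γ)) * ((1 + γ) ^ 2 / (2 * γ))
      = ((1 + 2 * γ) * (1 + γ) / (2 * γ)) ^ 2 := by
    field_simp
    ring
  rw [hsq, Real.sqrt_sq (by positivity)]

lemma traceF0Z_of_le_inv_succ {n γ : ℝ} (hn : n + 1 ≠ 0) (hγ : 0 < γ) :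
    traceF0Z n (2 + 2 * γ + 1 / (2 * γ)) ((1 + γ) ^ 2 / (2 * γ)) (1 / (2 * γ)) 0
      (2 * γ ^ 2 + 1 / (n + 1)) = 1 + 2 * γ := by
  rw [traceF0Z, sqrt_dual_mul_of_le_inv_succ hγ]
  field_simp
  ring

lemma one_lt_two_mul_mul_of_inv_succ_le {n γ : ℝ} (hn : 1 < n) (hγ : 1 / (n + 1) ≤ γ) :
    1 < 2 * n * γ := by
  have hsucc : 1 ≤ (n + 1) * γ := by
    rwa [div_le_iff₀ (by linarith), mul_comm] at hγ
  nlinarith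

lemma sqrt_dual_mul_of_inv_succ_le {n γ : ℝ} (hn : 1 < n) (hnγ : 1 < 2 * n * γ)
    (hγn : 2 * γ ≤ n) :
    √((1 - n) * (1 + 2 * γ) ^ 2 / (2 * (1 - 2 * n * γ)) *
        ((n - 2 * γ) ^ 2 / (2 * (1 - n) * (1 - 2 * n * γ))))
      = (1 + 2 * γ) * (n - 2 * γ) / (2 * (2 * n * γ - 1)) := by
  have hsq : (1 - n) * (1 + 2 * γ) ^ 2 / (2 * (1 - 2 * n * γ)) *
        ((n - 2 * γ) ^ 2 / (2 * (1 - n) * (1 - 2 * n * γ)))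
      = ((1 + 2 * γ) * (n - 2 * γ) / (2 * (2 * n * γ - 1))) ^ 2 := by
    have : 1 - n ≠ 0 := by linarith
    have : 1 - 2 * n * γ ≠ 0 := by linarith
    field_simp
    ring
  have hγ : 0 < γ := by nlinarith
  rw [hsq, Real.sqrt_sq (div_nonneg (by nlinarith) (by linarith))]

lemma traceF0Z_of_inv_succ_le {n γ : ℝ} (hn : 1 < n) (hnγ : 1 < 2 * n * γ)
    (hγn : 2 * γ ≤ n) :
    traceF0Z n ((1 - n) * (1 + 2 * γ) ^ 2 / (2 * (1 - 2 * n * γ)))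
      ((n - 2 * γ) ^ 2 / (2 * (1 - n) * (1 - 2 * n * γ))) ((1 - n) / (2 * (1 - 2 * n * γ)))
      (1 + (1 - 2 * γ) / (1 - 2 * n * γ)) (4 * γ ^ 2 + (1 - 2 * γ) ^ 2 / (n - 1))
      = 1 + 2 * γ := by
  rw [traceF0Z, sqrt_dual_mul_of_inv_succ_le hn hnγ hγn]
  have : n - 1 ≠ 0 := by linarith
  have : 1 - n ≠ 0 := by linarith
  have : 1 - n * 2 * γ ≠ 0 := by linarith
  have : n * 2 * γ - 1 ≠ 0 := by linarith
  field_simp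
  ring

/-- The dual feasible value matches the primal value of the X-MEMS SDP: for `γ ∈ (0, 1/2]`,
with the dual variables `𝔷_1, 𝔷_2, 𝔷_3, 𝔷_4` and purity `P` defined piecewise as stated, one
has `(1/(n+1))·[n 𝔷_1 + 2(n-1)(𝔷_2 - √(𝔷_1 𝔷_2))] + 𝔷_3 (P - 1) + 𝔷_4 = 1 + 2γ` in both
cases; equivalently, the dual SDP value `-tr(F_0 𝒵)` equals `-1 - 2γ`. -/
theorem dual_value_eq_primal (n : ℕ) (hn : 2 ≤ n) (γ : ℝ)
    (hγ1 : 0 < γ) (hγ2 : γ ≤ 1 / 2) :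
    (∀ z1 z2 z3 z4 P : ℝ, γ ≤ 1 / ((n : ℝ) + 1) →
      z1 = 2 + 2 * γ + 1 / (2 * γ) →
      z2 = (1 + γ) ^ 2 / (2 * γ) →
      z3 = 1 / (2 * γ) →
      z4 = 0 →
      P = 2 * γ ^ 2 + 1 / ((n : ℝ) + 1) →
      (1 / ((n : ℝ) + 1)) *
          ((n : ℝ) * z1 + 2 * ((n : ℝ) - 1) * (z2 - Real.sqrt (z1 * z2))) +
        z3 * (P - 1) + z4 = 1 + 2 * γ) ∧
    (∀ z1 z2 z3 z4 P : ℝ, 1 / ((n : ℝ) + 1) ≤ γ →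
      z1 = (1 - (n : ℝ)) * (1 + 2 * γ) ^ 2 / (2 * (1 - 2 * (n : ℝ) * γ)) →
      z2 = ((n : ℝ) - 2 * γ) ^ 2 / (2 * (1 - (n : ℝ)) * (1 - 2 * (n : ℝ) * γ)) →
      z3 = (1 - (n : ℝ)) / (2 * (1 - 2 * (n : ℝ) * γ)) →
      z4 = 1 + (1 - 2 * γ) / (1 - 2 * (n : ℝ) * γ) →
      P = 4 * γ ^ 2 + (1 - 2 * γ) ^ 2 / ((n : ℝ) - 1) →
      (1 / ((n : ℝ) + 1)) *
          ((n : ℝ) * z1 + 2 * ((n : ℝ) - 1) * (z2 - Real.sqrt (z1 * z2))) +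
        z3 * (P - 1) + z4 = 1 + 2 * γ) := by
  have hn2 : (2 : ℝ) ≤ n := by exact_mod_cast hn
  refine ⟨?_, ?_⟩
  · rintro z1 z2 z3 z4 P - rfl rfl rfl rfl rfl
    exact traceF0Z_of_le_inv_succ (by linarith) hγ1
  · rintro z1 z2 z3 z4 P hγ rfl rfl rfl rfl rfl
    exact traceF0Z_of_inv_succ_le (by linarith)
      (one_lt_two_mul_mul_of_inv_succ_le (by linarith) hγ) (by linarith)
end

section
/- Let n ≥ 1 be an integer, P a real, and λ ∈ ℝ^n. Let Q_n := I_n − J_n/(n+1), where J_n is the n×n all-ones matrix, and let j_n be the all-ones n-vector. Then the quadratic inequality (1 − ∑_{k=1}^n λ_k)² + ∑_{k=1}^n λ_k² ≤ P holds if and only if the (n+1)×(n+1) block matrix [[Q_n, λ],[λᵀ, P − 1 + 2·j_nᵀλ]] is positive semidefinite. -/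
/-!
`Q_n = I_n - J_n/(n+1)` is the inverse of the positive definite matrix `I_n + J_n`, hence positive
definite itself, so by the Schur complement criterion the block matrix is positive semidefinite iff
`P - 1 + 2 ∑ λ_k - λᵀ (I_n + J_n) λ ≥ 0`. Since `λᵀ (I_n + J_n) λ = ∑ λ_k² + (∑ λ_k)²`, this is the
purity constraint after completing the square.
-/

open Matrix

namespace Matrix

variable {ι : Type*} [Fintype ι]

theorem of_one_mul_of_one {R : Type*} [NonAssocSemiring R] :
    (of 1 : Matrix ι ι R) * of 1 = (Fintype.card ι : R) • of 1 := by
  ext; simp [mul_apply]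

theorem posSemidef_of_one {R : Type*} [CommRing R] [PartialOrder R] [StarRing R]
    [StarOrderedRing R] [TrivialStar R] : (of 1 : Matrix ι ι R).PosSemidef := by
  convert posSemidef_vecMulVec_self_star (1 : ι → R)
  ext; simp

omit [Fintype ι] in
theorem posSemidef_iff_of_unique {R : Type*} [Unique ι] [CommRing R] [PartialOrder R]
    [StarRing R] [StarOrderedRing R] {M : Matrix ι ι R} :
    M.PosSemidef ↔ 0 ≤ M default default := by
  have hM : M = diagonal fun _ => M default default := by
    ext i j; simp [Subsingleton.elim i default, Subsingleton.elim j default]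
  rw [hM]; simp

variable [DecidableEq ι]

theorem one_add_of_one_mul_one_sub_smul_of_one {K : Type*} [Field K] [CharZero K] :
    (1 + of 1 : Matrix ι ι K) * (1 - ((Fintype.card ι : K) + 1)⁻¹ • of 1) = 1 := by
  have hc : (Fintype.card ι : K) + 1 ≠ 0 := Nat.cast_add_one_ne_zero _
  simp only [add_mul, mul_sub, one_mul, mul_one, mul_smul_comm, of_one_mul_of_one]
  match_scalars
  · rfl
  · field_simp; ring

theorem inv_one_sub_smul_of_one {K : Type*} [Field K] [CharZero K] :
    (1 - ((Fintype.card ι : K) + 1)⁻¹ • of 1 : Matrix ι ι K)⁻¹ = 1 + of 1 :=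
  inv_eq_left_inv one_add_of_one_mul_one_sub_smul_of_one

theorem posDef_one_sub_smul_of_one :
    (1 - ((Fintype.card ι : ℝ) + 1)⁻¹ • of 1 : Matrix ι ι ℝ).PosDef := by
  rw [← posDef_inv_iff, inv_one_sub_smul_of_one]
  exact PosDef.one.add_posSemidef posSemidef_of_one

theorem dotProduct_one_add_of_one_mulVec {R : Type*} [CommRing R] (b : ι → R) :
    b ⬝ᵥ (1 + of 1) *ᵥ b = ∑ i, b i ^ 2 + (∑ i, b i) ^ 2 := by
  rw [add_mulVec, one_mulVec, dotProduct_add]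
  simp [dotProduct, mulVec, sq, Finset.sum_mul]

theorem posSemidef_fromBlocks_replicateCol_iff {A : Matrix ι ι ℝ} (hA : A.PosDef)
    (b : ι → ℝ) (d : ℝ) :
    (fromBlocks A (replicateCol (Fin 1) b) (replicateRow (Fin 1) b)
      (of fun _ _ => d)).PosSemidef ↔ b ⬝ᵥ A⁻¹ *ᵥ b ≤ d := by
  have := hA.isUnit.invertible
  have hSchur := hA.fromBlocks₁₁ (replicateCol (Fin 1) b) (of fun _ _ => d)
  rw [conjTranspose_replicateCol, star_trivial] at hSchur
  rw [hSchur, posSemidef_iff_of_unique, sub_apply, of_apply, ← replicateRow_vecMul,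
    replicateRow_mul_replicateCol_apply, dotProduct_mulVec, sub_nonneg]

end Matrix

theorem purity_constraint_iff_lmi_general (n : ℕ) (P : ℝ) (lam : ℕ → ℝ) :
    ((1 - ∑ k ∈ Finset.range n, lam k) ^ 2 +
        ∑ k ∈ Finset.range n, (lam k) ^ 2 ≤ P) ↔
      Matrix.PosSemidef (Matrix.of fun p q : Fin (n + 1) =>
        if p.val < n ∧ q.val < n then
          (if p.val = q.val then (1 : ℝ) else 0) - 1 / ((n : ℝ) + 1)
        else if p.val < n ∧ q.val = n then lam p.val
        else if p.val = n ∧ q.val < n then lam q.val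
        else P - 1 + 2 * ∑ k ∈ Finset.range n, lam k) := by
  set b : Fin n → ℝ := fun i => lam i
  set c := P - 1 + 2 * ∑ k ∈ Finset.range n, lam k
  calc
    _ ↔ (fromBlocks (1 - ((Fintype.card (Fin n) : ℝ) + 1)⁻¹ • of 1) (replicateCol (Fin 1) b)
          (replicateRow (Fin 1) b) (of fun _ _ => c)).PosSemidef := by
      rw [posSemidef_fromBlocks_replicateCol_iff posDef_one_sub_smul_of_one,
        inv_one_sub_smul_of_one, dotProduct_one_add_of_one_mulVec]
      simp only [b, c, Fin.sum_univ_eq_sum_range (fun k => lam k),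
        Fin.sum_univ_eq_sum_range (fun k => lam k ^ 2)]
      constructor <;> intro h <;> linarith
    _ ↔ _ := by
      rw [← posSemidef_submatrix_equiv finSumFinEquiv]
      congr! 1
      ext (i | i) (j | j) <;> simp [b, one_apply, Fin.ext_iff, div_eq_mul_inv]

/-- Converting the quadratic purity constraint into a linear matrix inequality via the Schur
complement: for `λ ∈ ℝ^n` (0-based `lam`), the inequality
`(1 - ∑_k λ_k)² + ∑_k λ_k² ≤ P` holds if and only if the `(n+1) × (n+1)` block matrix
`[[Q_n, λ], [λᵀ, P - 1 + 2 j_nᵀ λ]]`, with `Q_n = I_n - J_n/(n+1)`, is positive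
semidefinite. -/
theorem purity_constraint_iff_lmi (n : ℕ) (hn : 1 ≤ n) (P : ℝ) (lam : ℕ → ℝ) :
    ((1 - ∑ k ∈ Finset.range n, lam k) ^ 2 +
        ∑ k ∈ Finset.range n, (lam k) ^ 2 ≤ P) ↔
      Matrix.PosSemidef (Matrix.of fun p q : Fin (n + 1) =>
        if p.val < n ∧ q.val < n then
          (if p.val = q.val then (1 : ℝ) else 0) - 1 / ((n : ℝ) + 1)
        else if p.val < n ∧ q.val = n then lam p.val
        else if p.val = n ∧ q.val < n then lam q.val
        else P - 1 + 2 * ∑ k ∈ Finset.range n, lam k) :=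
  purity_constraint_iff_lmi_general n P lam
end
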